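/- Let X₁, …, X_N be Boolean random variables (not necessarily independent) on a finite probability space, and let δ ∈ [0,1] be such that for every subset S ⊆ {1,…,N}, Pr[∀ i ∈ S, X_i = 1] ≤ δ^{|S|}. Then for every β ∈ [δ, 1], Pr[Σ_{i=1}^N X_i ≥ β·N] ≤ exp(−2N(β − δ)²). -/

import Mathlib

open MeasureTheory Finset

lemma sum_pow_card {α : Type*} [DecidableEq α] (T : Finset α) (x : ℝ) :
    ∑ S ∈ T.powerset, x ^ S.card = (x + 1) ^ T.card := by
  have h := Finset.prod_add (fun _ : α => x) (fun _ : α => (1 : ℝ)) T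
  simp only [Finset.prod_const, one_pow, mul_one] at h
  rw [h]


lemma bern_mgf (p : ℝ) (hp0 : 0 ≤ p) (hp1 : p ≤ 1) (t : ℝ) (ht : 0 ≤ t) :
    1 - p + p * Real.exp t ≤ Real.exp (p * t + t ^ 2 / 8) := by
  set D : ℝ → ℝ := fun s => 1 - p + p * Real.exp s with hDdef
  have hDs : ∀ s, D s = 1 - p + p * Real.exp s := fun s => rfl
  have hDpos : ∀ s, 0 < D s := by
    intro s
    rw [hDs]
    rcases lt_or_ge s 0 with hs | hs
    · have h1 : Real.exp s ≤ 1 := Real.exp_le_one_iff.mpr hs.le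
      nlinarith [Real.exp_pos s]
    · have h1 : 1 ≤ Real.exp s := Real.one_le_exp hs
      nlinarith [Real.exp_pos s]
  have hD : ∀ s, HasDerivAt D (p * Real.exp s) s := by
    intro s
    exact ((Real.hasDerivAt_exp s).const_mul p).const_add (1 - p)
  set g : ℝ → ℝ := fun s => p + s / 4 - p * Real.exp s / D s with hgdef
  have hg : ∀ s, HasDerivAt g (1 / 4 - p * (1 - p) * Real.exp s / (D s) ^ 2) s := by
    intro s
    have hnum : HasDerivAt (fun s => p * Real.exp s) (p * Real.exp s) s :=
      (Real.hasDerivAt_exp s).const_mul p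
    have hquot := hnum.div (hD s) (hDpos s).ne'
    have hlin : HasDerivAt (fun s : ℝ => p + s / 4) (1 / 4) s := by
      simpa using ((hasDerivAt_id s).div_const 4).const_add p
    have hfinal := hlin.sub hquot
    refine hfinal.congr_deriv ?_
    have hD0 : D s ≠ 0 := (hDpos s).ne'
    rw [hDs]
    field_simp
    ring
  have hgmono : Monotone g := by
    apply monotone_of_deriv_nonneg (fun s => (hg s).differentiableAt)
    intro s
    rw [(hg s).deriv]
    have key : 4 * (p * (1 - p) * Real.exp s) ≤ (D s) ^ 2 := by
      rw [hDs]
      nlinarith [Real.exp_pos s, sq_nonneg ((1 - p) - p * Real.exp s)]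
    have hpos := hDpos s
    rw [sub_nonneg, div_le_iff₀ (by positivity)]
    rw [hDs] at key ⊢
    nlinarith [key]
  have hg0 : g 0 = 0 := by simp [hgdef, hDs]
  set f : ℝ → ℝ := fun s => p * s + s ^ 2 / 8 - Real.log (D s) with hfdef
  have hf : ∀ s, HasDerivAt f (g s) s := by
    intro s
    have h1 : HasDerivAt (fun s : ℝ => p * s) p s := by
      simpa using (hasDerivAt_id s).const_mul p
    have h2 : HasDerivAt (fun s : ℝ => s ^ 2 / 8) (s / 4) s := by
      have := (hasDerivAt_pow 2 s).div_const 8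
      refine this.congr_deriv ?_
      norm_num
      ring
    have h3 : HasDerivAt (fun s => Real.log (D s)) (p * Real.exp s / D s) s :=
      (hD s).log (hDpos s).ne'
    exact (h1.add h2).sub h3
  have hfmono : MonotoneOn f (Set.Ici 0) := by
    have hdiff : Differentiable ℝ f := fun s => (hf s).differentiableAt
    apply monotoneOn_of_deriv_nonneg (convex_Ici 0) hdiff.continuous.continuousOn
      (fun s _ => (hdiff s).differentiableWithinAt)
    intro s hs
    rw [(hf s).deriv]
    have hs0 : (0:ℝ) ≤ s := by
      have := interior_subset hs
      simpa using this
    calc (0:ℝ) = g 0 := hg0.symm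
      _ ≤ g s := hgmono hs0
  have hf0 : f 0 = 0 := by simp [hfdef, hDs]
  have hft : 0 ≤ f t := by
    calc (0:ℝ) = f 0 := hf0.symm
      _ ≤ f t := hfmono Set.self_mem_Ici (Set.mem_Ici.mpr ht) ht
  have hlog : Real.log (D t) ≤ p * t + t ^ 2 / 8 := by
    have : f t = p * t + t ^ 2 / 8 - Real.log (D t) := rfl
    linarith [hft, this ▸ hft]
  calc 1 - p + p * Real.exp t = D t := (hDs t).symm
    _ = Real.exp (Real.log (D t)) := (Real.exp_log (hDpos t)).symm
    _ ≤ Real.exp (p * t + t ^ 2 / 8) := Real.exp_le_exp.mpr hlog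

theorem stmt_10 {Ω : Type*} [Fintype Ω] [MeasurableSpace Ω]
    (μ : Measure Ω) [IsProbabilityMeasure μ] (N : ℕ) (X : Fin N → Ω → Bool)
    (δ : ℝ) (hδ : δ ∈ Set.Icc (0 : ℝ) 1)
    (h : ∀ S : Finset (Fin N),
      (μ {ω | ∀ i ∈ S, X i ω = true}).toReal ≤ δ ^ S.card)
    (β : ℝ) (hβ : β ∈ Set.Icc δ 1) :
    (μ {ω | β * N ≤ ∑ i, if X i ω then (1 : ℝ) else 0}).toReal ≤
      Real.exp (-2 * N * (β - δ) ^ 2) := by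
  obtain ⟨hδ0, hδ1⟩ := hδ
  obtain ⟨hβδ, hβ1⟩ := hβ
  set t : ℝ := 4 * (β - δ) with htdef
  have ht : 0 ≤ t := by simp only [htdef]; linarith
  set L : ℝ := Real.exp t - 1 with hLdef
  have hL : 0 ≤ L := by
    have := Real.one_le_exp ht
    simp only [hLdef]; linarith
  set E : Finset (Fin N) → Set Ω := fun S => {ω | ∀ i ∈ S, X i ω = true} with hEdef
  set H : Finset (Fin N) → Set Ω := fun S => toMeasurable μ (E S) with hHdef
  set f : Ω → ℝ :=
    fun ω => ∑ S : Finset (Fin N), L ^ S.card * (H S).indicator (fun _ => (1 : ℝ)) ω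
    with hfdef
  have hfnonneg : ∀ ω, 0 ≤ f ω := by
    intro ω
    apply Finset.sum_nonneg
    intro S _
    exact mul_nonneg (pow_nonneg hL _)
      (Set.indicator_nonneg (fun _ _ => zero_le_one) ω)
  have hint : Integrable f μ := by
    apply integrable_finset_sum
    intro S _
    exact (((integrable_indicator_iff (measurableSet_toMeasurable μ (E S))).2
      (integrableOn_const (measure_ne_top μ _)))).const_mul _
  have hI : ∫ ω, f ω ∂μ = ∑ S : Finset (Fin N), L ^ S.card * (μ (E S)).toReal := by
    rw [integral_finset_sum]
    · apply Finset.sum_congr rfl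
      intro S _
      rw [integral_const_mul, integral_indicator_const (1 : ℝ)
        (measurableSet_toMeasurable μ (E S))]
      rw [Measure.real, measure_toMeasurable]
      simp
    · intro S _
      exact (((integrable_indicator_iff (measurableSet_toMeasurable μ (E S))).2
        (integrableOn_const (measure_ne_top μ _)))).const_mul _
  have hIle : ∫ ω, f ω ∂μ ≤ (L * δ + 1) ^ N := by
    rw [hI]
    calc ∑ S : Finset (Fin N), L ^ S.card * (μ (E S)).toReal
        ≤ ∑ S : Finset (Fin N), L ^ S.card * δ ^ S.card :=
          Finset.sum_le_sum fun S _ =>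
            mul_le_mul_of_nonneg_left (h S) (pow_nonneg hL _)
      _ = ∑ S ∈ (Finset.univ : Finset (Fin N)).powerset, (L * δ) ^ S.card := by
          rw [Finset.powerset_univ]
          exact Finset.sum_congr rfl fun S _ => (mul_pow L δ S.card).symm
      _ = (L * δ + 1) ^ N := by
          rw [sum_pow_card]
          simp
  set ε : ℝ := Real.exp (t * (β * N)) with hεdef
  have hεpos : 0 < ε := Real.exp_pos _
  have hsub : {ω | β * N ≤ ∑ i, if X i ω then (1 : ℝ) else 0} ⊆ {ω | ε ≤ f ω} := by
    intro ω hω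
    classical
    set T : Finset (Fin N) := Finset.univ.filter (fun i => X i ω = true) with hTdef
    have hsum : (∑ i, if X i ω then (1 : ℝ) else 0) = T.card := by
      simp [hTdef]
    have hk : β * N ≤ (T.card : ℝ) := by rw [← hsum]; exact hω
    have h1 : (L + 1) ^ T.card ≤ f ω := by
      calc (L + 1) ^ T.card = ∑ S ∈ T.powerset, L ^ S.card := (sum_pow_card T L).symm
        _ = ∑ S ∈ T.powerset, L ^ S.card * (H S).indicator (fun _ => (1 : ℝ)) ω := by
            apply Finset.sum_congr rfl
            intro S hS
            have hωE : ω ∈ E S := by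
              intro i hi
              exact (Finset.mem_filter.mp
                ((Finset.mem_powerset.mp hS) hi)).2
            have hωH : ω ∈ H S := subset_toMeasurable μ (E S) hωE
            rw [Set.indicator_of_mem hωH]
            simp
        _ ≤ ∑ S : Finset (Fin N), L ^ S.card * (H S).indicator (fun _ => (1 : ℝ)) ω :=
            Finset.sum_le_sum_of_subset_of_nonneg (Finset.subset_univ _)
              (fun S _ _ => mul_nonneg (pow_nonneg hL _)
                (Set.indicator_nonneg (fun _ _ => zero_le_one) ω))
    have h2 : ε ≤ (L + 1) ^ T.card := by
      have hL1 : L + 1 = Real.exp t := by simp [hLdef]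
      rw [hL1, ← Real.exp_nat_mul]
      apply Real.exp_le_exp.mpr
      calc t * (β * N) ≤ t * T.card := by
            apply mul_le_mul_of_nonneg_left hk ht
        _ = T.card * t := mul_comm _ _
    exact le_trans h2 h1
  have hM := mul_meas_ge_le_integral_of_nonneg (μ := μ)
    (ae_of_all μ hfnonneg) hint ε
  have hmono : (μ {ω | β * N ≤ ∑ i, if X i ω then (1 : ℝ) else 0}).toReal ≤
      (μ {ω | ε ≤ f ω}).toReal :=
    ENNReal.toReal_mono (measure_ne_top μ _) (measure_mono hsub)
  have hmark : (μ {ω | ε ≤ f ω}).toReal ≤ (L * δ + 1) ^ N / ε := by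
    rw [le_div_iff₀ hεpos]
    calc (μ {ω | ε ≤ f ω}).toReal * ε = ε * (μ {ω | ε ≤ f ω}).toReal := mul_comm _ _
      _ ≤ ∫ ω, f ω ∂μ := hM
      _ ≤ (L * δ + 1) ^ N := hIle
  have hbern : L * δ + 1 ≤ Real.exp (δ * t + t ^ 2 / 8) := by
    have := bern_mgf δ hδ0 hδ1 t ht
    calc L * δ + 1 = 1 - δ + δ * Real.exp t := by simp only [hLdef]; ring
      _ ≤ Real.exp (δ * t + t ^ 2 / 8) := this
  have hfinal : (L * δ + 1) ^ N / ε ≤ Real.exp (-2 * N * (β - δ) ^ 2) := by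
    have hbase : (0:ℝ) ≤ L * δ + 1 := by positivity
    have h1 : (L * δ + 1) ^ N ≤ Real.exp (δ * t + t ^ 2 / 8) ^ N :=
      pow_le_pow_left₀ hbase hbern N
    have h2 : Real.exp (δ * t + t ^ 2 / 8) ^ N = Real.exp (N * (δ * t + t ^ 2 / 8)) :=
      (Real.exp_nat_mul _ N).symm
    calc (L * δ + 1) ^ N / ε ≤ Real.exp (N * (δ * t + t ^ 2 / 8)) / ε := by
          gcongr
          rw [← h2]; exact h1
      _ = Real.exp (N * (δ * t + t ^ 2 / 8) - t * (β * N)) := by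
          rw [hεdef, ← Real.exp_sub]
      _ = Real.exp (-2 * N * (β - δ) ^ 2) := by
          congr 1
          rw [htdef]
          ring
  calc (μ {ω | β * N ≤ ∑ i, if X i ω then (1 : ℝ) else 0}).toReal
      ≤ (μ {ω | ε ≤ f ω}).toReal := hmono
    _ ≤ (L * δ + 1) ^ N / ε := hmark
    _ ≤ Real.exp (-2 * N * (β - δ) ^ 2) := hfinal
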